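/- arXiv:math/0008183 — 3 statements merged into one kernel-verified Lean document; each statement's English description precedes it below -/
import Mathlib

section
/- Let R̂ be the N²×N² matrix with entries R̂^{kl}_{ij} = q^{(k=l)−(k=l')}·(i=l)(j=k) + (q−q⁻¹)·(i<l)·((i=k)(j=l) − K^{kl}_{ij}), where K^{kl}_{ij} = C^{ij}C_{kl} and C^{ij} = q^{−ρ_i}δ_{i,j'}. Then R̂∘K = q^{1−N}·K and K∘R̂ = q^{1−N}·K. -/
open Matrix BigOperators

noncomputable section

/-- The standard `O_q(N)` exponents ρ_i; here `i : Fin N` is 0-based, so the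
1-based index of the paper is `i.val + 1`. -/
def rho (N : ℕ) (i : Fin N) : ℝ :=
  if 2 * ((i : ℕ) + 1) < N + 1 then (N : ℝ) / 2 - ((i : ℕ) + 1)
  else if 2 * ((i : ℕ) + 1) = N + 1 then 0
  else (N : ℝ) / 2 - ((i : ℕ) + 1) + 1

/-- The index map i ↦ i' = N+1−i (in 1-based indexing). -/
def pr {N : ℕ} (i : Fin N) : Fin N := i.rev

/-- The metric matrix C with entries C^{ij} = q^{−ρ_i} δ_{i,j'}. -/
def Cmat (q : ℝ) (N : ℕ) : Matrix (Fin N) (Fin N) ℝ :=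
  fun i j => if j = pr i then Real.rpow q (-(rho N i)) else 0

/-- The matrix K with entries K^{kl}_{ij} = C^{ij} C_{kl}; the row index is (k,l),
the column index is (i,j), so that matrix multiplication realises the composition
(K²)^{kl}_{ij} = Σ_{m,n} K^{kl}_{mn} K^{mn}_{ij}. -/
def Kmat (q : ℝ) (N : ℕ) : Matrix (Fin N × Fin N) (Fin N × Fin N) ℝ :=
  fun p r => Cmat q N r.1 r.2 * Cmat q N p.1 p.2

/-- The O_q(N) R-matrix R̂ with entries
R̂^{kl}_{ij} = q^{(k=l)−(k=l')}(i=l)(j=k) + (q−q⁻¹)(i<l)((i=k)(j=l) − K^{kl}_{ij});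
row index p = (k,l), column index r = (i,j). -/
def Rhat (q : ℝ) (N : ℕ) : Matrix (Fin N × Fin N) (Fin N × Fin N) ℝ :=
  fun p r =>
    q ^ (((if p.1 = p.2 then 1 else 0) - (if p.1 = pr p.2 then 1 else 0) : ℤ)) *
      (if r.1 = p.2 then 1 else 0) * (if r.2 = p.1 then 1 else 0)
    + (q - q⁻¹) * (if r.1 < p.2 then 1 else 0) *
      ((if r.1 = p.1 then 1 else 0) * (if r.2 = p.2 then 1 else 0) - Kmat q N p r)

/-- R̂⁻ = R̂ − (q−q⁻¹)·I + (q−q⁻¹)·K. -/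
def Rm (q : ℝ) (N : ℕ) : Matrix (Fin N × Fin N) (Fin N × Fin N) ℝ :=
  Rhat q N - (q - q⁻¹) • (1 : Matrix (Fin N × Fin N) (Fin N × Fin N) ℝ)
    + (q - q⁻¹) • Kmat q N


namespace RK

variable (q : ℝ) (N : ℕ)

/-- q^{-rho_i} -/
def g (i : Fin N) : ℝ := Real.rpow q (-(rho N i))

/-- 2*rho_i as an integer -/
def e (i : Fin N) : ℤ :=
  if 2 * ((i : ℕ) + 1) < N + 1 then (N : ℤ) - 2*((i : ℕ) + 1)
  else if 2 * ((i : ℕ) + 1) = N + 1 then 0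
  else (N : ℤ) - 2*((i : ℕ) + 1) + 2

lemma two_rho (i : Fin N) : 2 * rho N i = (e N i : ℝ) := by
  unfold rho e
  split_ifs <;> push_cast <;> ring

lemma pr_val (i : Fin N) : ((pr i : Fin N) : ℕ) = N - ((i:ℕ) + 1) := Fin.val_rev i

lemma pr_pr (i : Fin N) : pr (pr i) = i := Fin.rev_rev i

lemma pr_eq_iff (i j : Fin N) : pr i = j ↔ i = pr j := by
  constructor <;> rintro rfl <;> simp [pr_pr]

lemma rho_pr (i : Fin N) : rho N (pr i) = - rho N i := by
  have hi : (i:ℕ) < N := i.isLt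
  have hv : ((pr i : Fin N) : ℕ) = N - ((i:ℕ) + 1) := pr_val N i
  unfold rho
  rw [hv]
  have h1 : (↑(N - ((i:ℕ) + 1)) : ℝ) = (N : ℝ) - ((i:ℕ) + 1) := by
    have : ((i:ℕ)+1) ≤ N := hi
    push_cast [this]; ring
  split_ifs with a b c d e f <;> push_cast at * <;> try linarith
  all_goals omega

lemma g_pos (hq : 0 < q) (i : Fin N) : 0 < g q N i := Real.rpow_pos_of_pos hq _

lemma g_sq (hq : 0 < q) (i : Fin N) : g q N i ^ 2 = q ^ (-(e N i)) := by
  unfold g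
  rw [show Real.rpow q (-(rho N i)) = q ^ (-(rho N i)) from rfl,
    ← Real.rpow_natCast (q ^ (-(rho N i)) : ℝ) 2, ← Real.rpow_mul hq.le,
    ← Real.rpow_intCast q]
  congr 1
  push_cast
  have := two_rho N i
  linarith

lemma g_pr (hq : 0 < q) (i : Fin N) : g q N (pr i) = q ^ (e N i) * g q N i := by
  unfold g
  rw [rho_pr, neg_neg, show Real.rpow q (rho N i) = q ^ (rho N i) from rfl,
    show Real.rpow q (-(rho N i)) = q ^ (-(rho N i)) from rfl,
    ← Real.rpow_intCast q, ← Real.rpow_add hq]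
  congr 1
  have := two_rho N i
  linarith

/-- partial sum of squares -/
def P (m : ℕ) : ℝ := ∑ i : Fin N, if (i : ℕ) < m then g q N i ^ 2 else 0

lemma hstep (hq : 0 < q) (a : ℤ) : (q - q⁻¹) * q ^ a = q ^ (a+1) - q ^ (a-1) := by
  rw [zpow_add₀ hq.ne', zpow_sub₀ hq.ne', zpow_one]
  field_simp

lemma P_succ (m : ℕ) (hm : m < N) :
    P q N (m+1) = P q N m + g q N ⟨m, hm⟩ ^ 2 := by
  unfold P
  have key : ∀ i : Fin N, (if (i:ℕ) < m+1 then g q N i ^ 2 else 0)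
      = (if (i:ℕ) < m then g q N i ^ 2 else 0) + (if i = ⟨m, hm⟩ then g q N i ^ 2 else 0) := by
    intro i
    by_cases h : (i:ℕ) < m
    · rw [if_pos (by omega), if_pos h, if_neg (by rintro rfl; simp at h)]
      ring
    · by_cases h2 : (i:ℕ) = m
      · rw [if_pos (by omega), if_neg h, if_pos (Fin.ext h2)]
        ring
      · rw [if_neg (by omega), if_neg h,
          if_neg (fun hh => h2 (by simp [hh]))]
        ring
  rw [Finset.sum_congr rfl (fun i _ => key i), Finset.sum_add_distrib]
  congr 1
  simp

lemma P_formula (hq : 0 < q) : ∀ m : ℕ, m ≤ N →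
    (q - q⁻¹) * P q N m =
      (if 2*m ≤ N then q ^ (2*(m:ℤ) - N + 1) - q ^ (1 - (N:ℤ))
       else (q - q⁻¹) + q ^ (2*(m:ℤ) - N - 1) - q ^ (1 - (N:ℤ))) := by
  intro m
  induction m with
  | zero =>
    intro _
    have h0 : P q N 0 = 0 := by unfold P; simp
    rw [h0, if_pos (by omega), show 2*((0:ℕ):ℤ) - N + 1 = 1 - (N:ℤ) by push_cast; ring]
    ring
  | succ m ih =>
    intro hm1
    have hm : m < N := by omega
    have ihv := ih (by omega)
    rw [P_succ q N m hm, mul_add, ihv, g_sq q N hq, hstep q hq]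
    rcases lt_trichotomy (2*(m+1)) (N+1) with h | h | h
    · have he : e N ⟨m, hm⟩ = (N:ℤ) - 2*((m:ℤ)+1) := by
        simp only [e, Fin.val_mk]
        split_ifs <;> omega
      rw [if_pos (show 2*m ≤ N by omega), if_pos (show 2*(m+1) ≤ N by omega), he]
      rw [show -((N:ℤ) - 2*((m:ℤ)+1)) + 1 = 2*(↑(m+1):ℤ) - N + 1 by push_cast; ring,
        show -((N:ℤ) - 2*((m:ℤ)+1)) - 1 = 2*(m:ℤ) - N + 1 by ring]
      ring
    · have he : e N ⟨m, hm⟩ = 0 := by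
        simp only [e, Fin.val_mk]
        split_ifs <;> omega
      rw [if_pos (show 2*m ≤ N by omega), if_neg (show ¬ (2*(m+1) ≤ N) by omega), he]
      rw [show 2*(m:ℤ) - N + 1 = 0 by push_cast at h ⊢; omega,
        show 2*(↑(m+1):ℤ) - N - 1 = 0 by push_cast at h ⊢; omega,
        show -(0:ℤ) + 1 = 1 by ring, show -(0:ℤ) - 1 = -1 by ring,
        zpow_one, zpow_zero, _root_.zpow_neg_one]
      ring
    · have he : e N ⟨m, hm⟩ = (N:ℤ) - 2*((m:ℤ)+1) + 2 := by
        simp only [e, Fin.val_mk]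
        split_ifs <;> omega
      rw [he, if_neg (show ¬ (2*(m+1) ≤ N) by omega)]
      by_cases hb : 2*m ≤ N
      · have hbe : 2*(m:ℤ) = N := by push_cast at h ⊢; omega
        rw [if_pos hb]
        rw [show -((N:ℤ) - 2*((m:ℤ)+1) + 2) + 1 = 1 by omega,
          show -((N:ℤ) - 2*((m:ℤ)+1) + 2) - 1 = -1 by omega,
          show 2*(m:ℤ) - N + 1 = 1 by omega,
          show 2*(↑(m+1):ℤ) - N - 1 = 1 by push_cast; omega,
          zpow_one, _root_.zpow_neg_one]
        ring
      · rw [if_neg hb]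
        rw [show -((N:ℤ) - 2*((m:ℤ)+1) + 2) + 1 = 2*(↑(m+1):ℤ) - N - 1 by push_cast; ring,
          show -((N:ℤ) - 2*((m:ℤ)+1) + 2) - 1 = 2*(m:ℤ) - N - 1 by ring]
        ring

end RK

namespace RK
variable (q : ℝ) (N : ℕ)

lemma core (hq : 0 < q) (k : Fin N) :
    q ^ (((if k = pr k then 1 else 0) - 1 : ℤ)) * g q N (pr k)
    + (q - q⁻¹) * ((if (k:ℕ) < N - 1 - (k:ℕ) then (1:ℝ) else 0) * g q N k
        - g q N k * P q N (N - 1 - (k:ℕ)))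
    = q ^ ((1:ℤ) - N) * g q N k := by
  have hk : (k:ℕ) < N := k.isLt
  set m : ℕ := N - 1 - (k:ℕ) with hmdef
  have hmN : m ≤ N := by omega
  have hPm := P_formula q N hq m hmN
  have hmc : ((m : ℕ) : ℤ) = (N:ℤ) - 1 - (k:ℕ) := by omega
  have hprval : ((pr k : Fin N) : ℕ) = N - ((k:ℕ)+1) := pr_val N k
  have hgpr := g_pr q N hq k
  have hqne : q ≠ 0 := hq.ne'
  rcases lt_trichotomy (2*((k:ℕ)+1)) (N+1) with h | h | h
  · -- k < pr k
    have hlt : (k:ℕ) < N - 1 - (k:ℕ) := by omega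
    have hne : k ≠ pr k := by
      intro hh; have := congrArg Fin.val hh; rw [hprval] at this; omega
    have he : e N k = (N:ℤ) - 2*((k:ℕ)+1) := by
      simp only [e]; split_ifs <;> omega
    rw [if_neg hne, if_pos hlt, hgpr, he]
    by_cases hb : 2*((k:ℕ)+1) = N
    · -- boundary
      have hm2 : 2*m ≤ N := by omega
      rw [if_pos hm2] at hPm
      rw [show 2*((m:ℕ):ℤ) - N + 1 = 1 by omega] at hPm
      rw [show (N:ℤ) - 2*((k:ℕ)+1) = 0 by omega, zpow_zero,
        show ((0:ℤ)-1 : ℤ) = -1 by ring, _root_.zpow_neg_one, zpow_one] at *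
      have hinv : q⁻¹ = q ^ ((-1 : ℤ)) := (_root_.zpow_neg_one q).symm
      linear_combination (- g q N k) * hPm
    · have hm2 : ¬ (2*m ≤ N) := by omega
      rw [if_neg hm2] at hPm
      rw [show 2*((m:ℕ):ℤ) - N - 1 = (N:ℤ) - 2*((k:ℕ)+1) - 1 by omega] at hPm
      rw [show ((0:ℤ)-1 : ℤ) = -1 by ring]
      rw [show ((N:ℤ) - 2*((k:ℕ)+1) - 1) = -1 + ((N:ℤ) - 2*((k:ℕ)+1)) by ring,
        zpow_add₀ hqne] at hPm
      linear_combination (- g q N k) * hPm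
  · -- k = pr k
    have heq : k = pr k := by
      apply Fin.ext; rw [hprval]; omega
    have hlt : ¬ ((k:ℕ) < N - 1 - (k:ℕ)) := by omega
    have he : e N k = 0 := by
      simp only [e]; split_ifs <;> omega
    rw [if_pos heq, if_neg hlt, hgpr, he, zpow_zero, one_mul,
      show ((1:ℤ)-1 : ℤ) = 0 by ring, zpow_zero, one_mul]
    have hm2 : 2*m ≤ N := by omega
    rw [if_pos hm2, show 2*((m:ℕ):ℤ) - N + 1 = 0 by omega, zpow_zero] at hPm
    linear_combination (- g q N k) * hPm
  · -- pr k < k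
    have hne : k ≠ pr k := by
      intro hh; have := congrArg Fin.val hh; rw [hprval] at this; omega
    have hlt : ¬ ((k:ℕ) < N - 1 - (k:ℕ)) := by omega
    have he : e N k = (N:ℤ) - 2*((k:ℕ)+1) + 2 := by
      simp only [e]; split_ifs <;> omega
    rw [if_neg hne, if_neg hlt, hgpr, he,
      show ((0:ℤ)-1 : ℤ) = -1 by ring]
    have hm2 : 2*m ≤ N := by omega
    rw [if_pos hm2,
      show 2*((m:ℕ):ℤ) - N + 1 = -1 + ((N:ℤ) - 2*((k:ℕ)+1) + 2) by omega,
      zpow_add₀ hqne] at hPm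
    linear_combination (- g q N k) * hPm

end RK

namespace RK
variable (q : ℝ) (N : ℕ)

lemma Cmat_diag (i : Fin N) : Cmat q N i (pr i) = g q N i := by
  unfold Cmat g; rw [if_pos rfl]

lemma pr_pr_eq_iff (i j : Fin N) : pr i = pr j ↔ i = j := by
  constructor
  · intro h; have := congrArg pr h; rwa [pr_pr, pr_pr] at this
  · rintro rfl; rfl

lemma lt_pr_iff (i k : Fin N) : i < pr k ↔ (i:ℕ) < N - 1 - (k:ℕ) := by
  rw [Fin.lt_def, pr_val]
  have := i.isLt; have := k.isLt
  omega

lemma pr_lt_iff (i k : Fin N) : k < pr i ↔ (i:ℕ) < N - 1 - (k:ℕ) := by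
  rw [Fin.lt_def, pr_val]
  have := i.isLt; have := k.isLt
  omega

end RK


namespace RK
variable (q : ℝ) (N : ℕ)

lemma row_sum (hq : 0 < q) (p : Fin N × Fin N) :
    ∑ mn : Fin N × Fin N, Rhat q N p mn * Cmat q N mn.1 mn.2
      = q ^ ((1:ℤ) - N) * Cmat q N p.1 p.2 := by
  obtain ⟨k, l⟩ := p
  rw [Fintype.sum_prod_type]
  have inner : ∀ i : Fin N, (∑ j : Fin N, Rhat q N (k,l) (i,j) * Cmat q N i j)
      = Rhat q N (k,l) (i, pr i) * g q N i := by
    intro i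
    have hptw : ∀ j, Rhat q N (k,l) (i,j) * Cmat q N i j
        = if j = pr i then Rhat q N (k,l) (i,j) * g q N i else 0 := by
      intro j; unfold Cmat g
      split_ifs <;> ring
    rw [Finset.sum_congr rfl fun j _ => hptw j, Finset.sum_ite_eq' Finset.univ (pr i)]
    simp
  rw [Finset.sum_congr rfl fun i _ => inner i]
  by_cases hl : l = pr k
  · subst hl
    have expand : ∀ i : Fin N, Rhat q N (k, pr k) (i, pr i) * g q N i
        = (if i = pr k then q ^ (((if k = pr k then 1 else 0) - 1 : ℤ)) * g q N (pr k) else 0)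
          + (if i = k then (q - q⁻¹) * ((if (k:ℕ) < N - 1 - (k:ℕ) then (1:ℝ) else 0) * g q N k) else 0)
          + (-((q - q⁻¹) * g q N k)) * (if (i:ℕ) < N - 1 - (k:ℕ) then g q N i ^ 2 else 0) := by
      intro i
      unfold Rhat Kmat
      simp only [Cmat_diag, pr_pr, eq_self_iff_true, if_true]
      have h1 : (pr i = k) ↔ (i = pr k) := by rw [← pr_pr N k, pr_pr_eq_iff, pr_pr]
      have h2 : (pr i = pr k) ↔ (i = k) := pr_pr_eq_iff N i k
      have h3 : (i < pr k) ↔ ((i:ℕ) < N - 1 - (k:ℕ)) := lt_pr_iff N i k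
      simp only [h1, h2, h3]
      rcases eq_or_ne i (pr k) with rfl | a
      · have hc : ¬ ((pr k : Fin N) : ℕ) < N - 1 - (k:ℕ) := by
          rw [pr_val]; omega
        simp only [eq_self_iff_true, if_true, if_neg hc]
        by_cases hkk : pr k = k
        · have hklt : ¬ ((k:ℕ) < N - 1 - (k:ℕ)) := by
            have := congrArg Fin.val hkk; rw [pr_val] at this; omega
          simp only [if_pos hkk, if_neg hklt]
          ring
        · simp only [if_neg hkk]; ring
      · simp only [if_neg a]
        rcases eq_or_ne i k with rfl | b
        · simp only [eq_self_iff_true, if_true]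
          by_cases c : (i:ℕ) < N - 1 - (i:ℕ)
          · simp only [if_pos c]; ring
          · simp only [if_neg c]; ring
        · simp only [if_neg b]
          by_cases c : (i:ℕ) < N - 1 - (k:ℕ)
          · simp only [if_pos c]; ring
          · simp only [if_neg c]; ring
    rw [Finset.sum_congr rfl fun i _ => expand i]
    rw [Finset.sum_add_distrib, Finset.sum_add_distrib,
      Finset.sum_ite_eq' Finset.univ (pr k), Finset.sum_ite_eq' Finset.univ k,
      ← Finset.mul_sum]
    simp only [Finset.mem_univ, if_true]
    have hP : ∑ i : Fin N, (if (i:ℕ) < N - 1 - (k:ℕ) then g q N i ^ 2 else 0)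
        = P q N (N - 1 - (k:ℕ)) := rfl
    rw [hP, Cmat_diag]
    have := core q N hq k
    linear_combination this
  · rw [show Cmat q N k l = 0 by unfold Cmat; rw [if_neg hl], mul_zero]
    apply Finset.sum_eq_zero
    intro i _
    unfold Rhat Kmat
    simp only
    rw [show Cmat q N k l = 0 by unfold Cmat; rw [if_neg hl], mul_zero, sub_zero]
    have e1 : (if i = l then (1:ℝ) else 0) * (if pr i = k then (1:ℝ) else 0) = 0 := by
      split_ifs with a b
      case _ => exfalso; apply hl; rw [a] at b; rw [← b, pr_pr]
      all_goals ring
    have e2 : (if i = k then (1:ℝ) else 0) * (if pr i = l then (1:ℝ) else 0) = 0 := by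
      split_ifs with a b
      case _ => exfalso; apply hl; rw [a] at b; rw [← b]
      all_goals ring
    linear_combination (g q N i * q ^ (((if k = l then 1 else 0) - (if k = pr l then 1 else 0) : ℤ))) * e1
      + (g q N i * (q - q⁻¹) * (if i < l then (1:ℝ) else 0)) * e2

end RK

namespace RK
variable (q : ℝ) (N : ℕ)

lemma col_sum (hq : 0 < q) (r : Fin N × Fin N) :
    ∑ mn : Fin N × Fin N, Cmat q N mn.1 mn.2 * Rhat q N mn r
      = q ^ ((1:ℤ) - N) * Cmat q N r.1 r.2 := by
  obtain ⟨k, l⟩ := r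
  rw [Fintype.sum_prod_type]
  have inner : ∀ i : Fin N, (∑ j : Fin N, Cmat q N i j * Rhat q N (i,j) (k,l))
      = g q N i * Rhat q N (i, pr i) (k,l) := by
    intro i
    have hptw : ∀ j, Cmat q N i j * Rhat q N (i,j) (k,l)
        = if j = pr i then g q N i * Rhat q N (i,j) (k,l) else 0 := by
      intro j; unfold Cmat g
      split_ifs <;> ring
    rw [Finset.sum_congr rfl fun j _ => hptw j, Finset.sum_ite_eq' Finset.univ (pr i)]
    simp
  rw [Finset.sum_congr rfl fun i _ => inner i]
  by_cases hl : l = pr k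
  · subst hl
    have expand : ∀ i : Fin N, g q N i * Rhat q N (i, pr i) (k, pr k)
        = (if i = pr k then q ^ (((if k = pr k then 1 else 0) - 1 : ℤ)) * g q N (pr k) else 0)
          + (if i = k then (q - q⁻¹) * ((if (k:ℕ) < N - 1 - (k:ℕ) then (1:ℝ) else 0) * g q N k) else 0)
          + (-((q - q⁻¹) * g q N k)) * (if (i:ℕ) < N - 1 - (k:ℕ) then g q N i ^ 2 else 0) := by
      intro i
      unfold Rhat Kmat
      simp only [Cmat_diag, pr_pr, eq_self_iff_true, if_true]
      have h1 : (k = pr i) ↔ (i = pr k) := by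
        constructor
        · rintro rfl; rw [pr_pr]
        · rintro rfl; rw [pr_pr]
      have h2 : (pr k = i) ↔ (i = pr k) := eq_comm
      have h3 : (pr k = pr i) ↔ (i = k) := by
        rw [pr_pr_eq_iff]; exact eq_comm
      have h4 : (k = i) ↔ (i = k) := eq_comm
      have h5 : (k < pr i) ↔ ((i:ℕ) < N - 1 - (k:ℕ)) := pr_lt_iff N i k
      simp only [h1, h2, h3, h4, h5]
      rcases eq_or_ne i (pr k) with rfl | a
      · have hc : ¬ ((pr k : Fin N) : ℕ) < N - 1 - (k:ℕ) := by
          rw [pr_val]; omega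
        simp only [eq_self_iff_true, if_true, if_neg hc, pr_pr]
        by_cases hkk : pr k = k
        · have hkk' : k = pr k := hkk.symm
          have hklt : ¬ ((k:ℕ) < N - 1 - (k:ℕ)) := by
            have := congrArg Fin.val hkk; rw [pr_val] at this; omega
          simp only [if_pos hkk, if_pos hkk', if_neg hklt]
          norm_num
        · have hkk' : ¬ k = pr k := fun hh => hkk hh.symm
          simp only [if_neg hkk, if_neg hkk']
          norm_num
          ring
      · simp only [if_neg a]
        rcases eq_or_ne i k with rfl | b
        · simp only [eq_self_iff_true, if_true]
          by_cases c : (i:ℕ) < N - 1 - (i:ℕ)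
          · simp only [if_pos c]; ring
          · simp only [if_neg c]; ring
        · simp only [if_neg b]
          by_cases c : (i:ℕ) < N - 1 - (k:ℕ)
          · simp only [if_pos c]; ring
          · simp only [if_neg c]; ring
    rw [Finset.sum_congr rfl fun i _ => expand i]
    rw [Finset.sum_add_distrib, Finset.sum_add_distrib,
      Finset.sum_ite_eq' Finset.univ (pr k), Finset.sum_ite_eq' Finset.univ k,
      ← Finset.mul_sum]
    simp only [Finset.mem_univ, if_true]
    have hP : ∑ i : Fin N, (if (i:ℕ) < N - 1 - (k:ℕ) then g q N i ^ 2 else 0)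
        = P q N (N - 1 - (k:ℕ)) := rfl
    rw [hP, Cmat_diag]
    have := core q N hq k
    linear_combination this
  · rw [show Cmat q N k l = 0 by unfold Cmat; rw [if_neg hl], mul_zero]
    apply Finset.sum_eq_zero
    intro i _
    unfold Rhat Kmat
    simp only
    rw [show Cmat q N k l = 0 by unfold Cmat; rw [if_neg hl], zero_mul, sub_zero]
    have e1 : (if k = pr i then (1:ℝ) else 0) * (if l = i then (1:ℝ) else 0) = 0 := by
      split_ifs with a b
      case _ => exfalso; apply hl; rw [b, a, pr_pr]
      all_goals ring
    have e2 : (if k = i then (1:ℝ) else 0) * (if l = pr i then (1:ℝ) else 0) = 0 := by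
      split_ifs with a b
      case _ => exfalso; apply hl; rw [b, a]
      all_goals ring
    linear_combination (g q N i * q ^ (((if i = pr i then 1 else 0) - (if i = pr (pr i) then 1 else 0) : ℤ))) * e1
      + (g q N i * (q - q⁻¹) * (if k < pr i then (1:ℝ) else 0)) * e2

end RK

theorem Rhat_Kmat (q : ℝ) (hq : 0 < q) (hq1 : q ≠ 1) (N : ℕ) (hN : 3 ≤ N) :
    Rhat q N * Kmat q N = (q ^ ((1 : ℤ) - N)) • Kmat q N ∧
    Kmat q N * Rhat q N = (q ^ ((1 : ℤ) - N)) • Kmat q N := by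
  constructor
  · ext p r
    rw [Matrix.mul_apply, Matrix.smul_apply, smul_eq_mul]
    have hco : ∀ j : Fin N × Fin N, Rhat q N p j * Kmat q N j r
        = (Rhat q N p j * Cmat q N j.1 j.2) * Cmat q N r.1 r.2 := by
      intro j; unfold Kmat; ring
    rw [Finset.sum_congr rfl fun j _ => hco j, ← Finset.sum_mul, RK.row_sum q N hq p]
    unfold Kmat; ring
  · ext p r
    rw [Matrix.mul_apply, Matrix.smul_apply, smul_eq_mul]
    have hco : ∀ j : Fin N × Fin N, Kmat q N p j * Rhat q N j r
        = (Cmat q N j.1 j.2 * Rhat q N j r) * Cmat q N p.1 p.2 := by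
      intro j; unfold Kmat; ring
    rw [Finset.sum_congr rfl fun j _ => hco j, ← Finset.sum_mul, RK.col_sum q N hq r]
    unfold Kmat; ring
end
end

section
/- Define R̂⁻ = R̂ − (q−q⁻¹)·I + (q−q⁻¹)·K, where I is the identity and K^{kl}_{ij} = C^{ij}C_{kl}. Then R̂∘R̂⁻ = I = R̂⁻∘R̂, i.e., R̂⁻ is the two-sided inverse of R̂. -/
open Matrix BigOperators

noncomputable section

/-!
Write `c_i = q^{-ρ_i}`, so that `C^{ij} = c_i δ_{j,i'}` and `c_i c_{i'} = 1`, and `ω = q - q⁻¹`.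
Both `R̂` and `R̂⁻` are block diagonal for the splitting of the index pairs into
`W = {(k, k')}` and its complement. Off `W` the matrix `K` vanishes: `R̂` acts by `q` on `(k, k)`
and by `[[0, 1], [1, ω]]` on `{(k, l), (l, k)}`, and `R̂⁻ = R̂ - ω` inverts these blocks.
On `W` the entry `(k, i)` of the product involves the sum `Σ_{i' ≤ m < k'} c_m²`, which
telescopes since `ω c_m² = P(m+1) - P(m)` for an explicit `P`. A one-sided inverse of a square
matrix is two-sided.
-/

def cWeight (q : ℝ) (N : ℕ) (i : Fin N) : ℝ := Real.rpow q (-(rho N i))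

/-- The exponent `-2ρ_{t+1}` of `c_t²` (0-based `t`). -/
def cWeightSqExp (N t : ℕ) : ℤ :=
  if 2 * (t + 1) < N + 1 then 2 * t + 2 - N else if 2 * (t + 1) = N + 1 then 0 else 2 * t - N

def primitiveExp (N t : ℕ) : ℤ := if 2 * t + 1 ≤ N then 2 * t + 1 - N else 2 * t - 1 - N

/-- A primitive of `t ↦ (q - q⁻¹) c_t²`, by `ω q^e = q^(e+1) - q^(e-1)`; the indicator absorbs
the defect at the middle, where consecutive exponents of `c_t²` do not differ by 2. -/
def weightPrimitive (q : ℝ) (N t : ℕ) : ℝ :=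
  q ^ primitiveExp N t + (q - q⁻¹) * if N ≤ 2 * t then 1 else 0

lemma sub_inv_mul_zpow {K : Type*} [Field K] {x : K} (hx : x ≠ 0) (e : ℤ) :
    (x - x⁻¹) * x ^ e = x ^ (e + 1) - x ^ (e - 1) := by
  rw [zpow_add₀ hx, zpow_sub₀ hx, zpow_one]
  field_simp

lemma weightPrimitive_succ_sub {q : ℝ} (hq : q ≠ 0) (N t : ℕ) :
    weightPrimitive q N (t + 1) - weightPrimitive q N t = (q - q⁻¹) * q ^ cWeightSqExp N t := by
  unfold weightPrimitive
  by_cases hmid : 2 * t + 1 ≤ N ∧ N ≤ 2 * t + 2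
  · have hg : primitiveExp N (t + 1) = primitiveExp N t := by
      unfold primitiveExp; split_ifs <;> omega
    have hs : cWeightSqExp N t = 0 := by unfold cWeightSqExp; split_ifs <;> omega
    rw [hg, hs, if_pos (by omega), if_neg (by omega), zpow_zero]
    ring
  · have hg₁ : primitiveExp N (t + 1) = cWeightSqExp N t + 1 := by
      unfold primitiveExp cWeightSqExp; split_ifs <;> omega
    have hg₀ : primitiveExp N t = cWeightSqExp N t - 1 := by
      unfold primitiveExp cWeightSqExp; split_ifs <;> omega
    have hjump : (N ≤ 2 * (t + 1)) = (N ≤ 2 * t) := propext (by omega)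
    simp only [hg₁, hg₀, hjump, sub_inv_mul_zpow hq]
    ring

section

variable {N : ℕ}

lemma pr_pr (i : Fin N) : pr (pr i) = i := Fin.rev_rev i

lemma val_pr (i : Fin N) : (pr i : ℕ) = N - (i + 1) := Fin.val_rev i

lemma pr_eq_iff {i j : Fin N} : pr i = j ↔ i = pr j := Fin.rev_eq_iff

lemma pr_inj {i j : Fin N} : pr i = pr j ↔ i = j := Fin.rev_inj

lemma eq_pr_comm {i j : Fin N} : i = pr j ↔ j = pr i := eq_comm.trans pr_eq_iff

lemma pr_le_pr {i j : Fin N} : pr i ≤ pr j ↔ j ≤ i := Fin.rev_le_rev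

lemma pr_le_comm {i j : Fin N} : pr i ≤ j ↔ pr j ≤ i := by
  rw [← pr_le_pr, pr_pr]

lemma rho_pr (i : Fin N) : rho N (pr i) = -rho N i := by
  have hpr : ((pr i : ℕ) : ℝ) = N - (i + 1) := by
    rw [val_pr, Nat.cast_sub (by omega)]
    push_cast
    ring
  unfold rho
  rw [hpr]
  split_ifs <;> first | (exfalso; rw [val_pr] at *; omega) | ring

lemma Cmat_apply (q : ℝ) (i j : Fin N) :
    Cmat q N i j = if j = pr i then cWeight q N i else 0 := rfl

lemma Cmat_eq_zero (q : ℝ) {i j : Fin N} (h : j ≠ pr i) : Cmat q N i j = 0 := if_neg h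

lemma cWeight_mul_cWeight_pr {q : ℝ} (hq : 0 < q) (i : Fin N) :
    cWeight q N i * cWeight q N (pr i) = 1 := by
  simp [cWeight, Real.rpow_eq_pow, ← Real.rpow_add hq, rho_pr]

lemma cWeight_sq {q : ℝ} (hq : 0 < q) (i : Fin N) : cWeight q N i ^ 2 = q ^ cWeightSqExp N i := by
  rw [sq, cWeight, Real.rpow_eq_pow, ← Real.rpow_add hq, ← Real.rpow_intCast]
  congr 1
  unfold rho cWeightSqExp
  split_ifs <;> push_cast <;> ring

lemma sub_inv_mul_sum_Ico_cWeight_sq {q : ℝ} (hq : 0 < q) {a b : Fin N} (hab : a ≤ b) :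
    (q - q⁻¹) * ∑ m ∈ Finset.Ico a b, cWeight q N m ^ 2
      = weightPrimitive q N b - weightPrimitive q N a := by
  simp only [cWeight_sq hq]
  rw [← Finset.sum_Ico_sub _ hab, ← Fin.map_valEmbedding_Ico, Finset.sum_map, Finset.mul_sum]
  exact Finset.sum_congr rfl fun m _ => (weightPrimitive_succ_sub hq.ne' N m).symm

def rhatExp (p : Fin N × Fin N) : ℤ :=
  (if p.1 = p.2 then 1 else 0) - (if p.1 = pr p.2 then 1 else 0)

lemma rhatExp_swap (p : Fin N × Fin N) : rhatExp p.swap = rhatExp p := by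
  simp only [rhatExp, Prod.fst_swap, Prod.snd_swap, eq_comm (a := p.2), eq_pr_comm]

lemma rhatExp_pr (i : Fin N) : rhatExp (pr i, i) = rhatExp (i, pr i) := rhatExp_swap (i, pr i)

lemma weightPrimitive_eq {q : ℝ} (hq : 0 < q) (m : Fin N) :
    weightPrimitive q N m
      = q ^ rhatExp (m, pr m) * cWeight q N m ^ 2 + (q - q⁻¹) * if pr m < m then 1 else 0 := by
  have hpr := val_pr m
  rw [cWeight_sq hq, ← zpow_add₀ hq.ne', weightPrimitive]
  congr 2
  · simp only [rhatExp, primitiveExp, cWeightSqExp, pr_pr, Fin.ext_iff, hpr]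
    split_ifs <;> omega
  · simp only [Fin.lt_def, hpr]
    exact if_congr (by omega) rfl rfl

lemma Kmat_eq_zero_left (q : ℝ) {s : Fin N × Fin N} (hs : s.2 ≠ pr s.1) (r : Fin N × Fin N) :
    Kmat q N s r = 0 := by
  simp [Kmat, Cmat_eq_zero q hs]

lemma Rhat_apply (q : ℝ) (p r : Fin N × Fin N) :
    Rhat q N p r = q ^ rhatExp p * (if r = p.swap then 1 else 0)
      + (q - q⁻¹) * (if r.1 < p.2 then 1 else 0) * ((if r = p then 1 else 0) - Kmat q N p r) := by
  have hswap : (if r = p.swap then (1 : ℝ) else 0)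
      = (if r.1 = p.2 then 1 else 0) * (if r.2 = p.1 then 1 else 0) := by
    rw [ite_zero_mul_ite_zero, one_mul]
    simp only [Prod.ext_iff, Prod.fst_swap, Prod.snd_swap]
  have hdiag : (if r = p then (1 : ℝ) else 0)
      = (if r.1 = p.1 then 1 else 0) * (if r.2 = p.2 then 1 else 0) := by
    rw [ite_zero_mul_ite_zero, one_mul]
    simp only [Prod.ext_iff]
  rw [hswap, hdiag, Rhat, rhatExp, mul_assoc]

lemma Rm_apply (q : ℝ) (s r : Fin N × Fin N) :
    Rm q N s r = q ^ rhatExp s * (if r = s.swap then 1 else 0)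
      - (q - q⁻¹) * (if s.2 ≤ r.1 then 1 else 0) * ((if r = s then 1 else 0) - Kmat q N s r) := by
  have hlt : (if r.1 < s.2 then (1 : ℝ) else 0) = 1 - if s.2 ≤ r.1 then 1 else 0 := by
    rcases lt_or_ge r.1 s.2 with h | h
    · simp [h, not_le.mpr h]
    · simp [h, not_lt.mpr h]
  simp only [Rm, Matrix.add_apply, Matrix.sub_apply, Matrix.smul_apply, Matrix.one_apply,
    smul_eq_mul, Rhat_apply, hlt, eq_comm (a := s)]
  ring

lemma Rm_apply_eq_zero (q : ℝ) {s r : Fin N × Fin N} (hs : s.2 = pr s.1)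
    (hr : r.2 ≠ pr r.1) : Rm q N s r = 0 := by
  have h₁ : r ≠ s.swap := by rintro rfl; exact hr (eq_pr_comm.mp hs)
  have h₂ : r ≠ s := by rintro rfl; exact hr hs
  simp [Rm_apply, h₁, h₂, Kmat, Cmat_eq_zero q hr]

lemma Rm_apply_of_eq_pr (q : ℝ) {s r : Fin N × Fin N} (hs : s.2 = pr s.1)
    (hr : r.2 = pr r.1) : Rm q N s r = q ^ rhatExp s * (if r.1 = s.2 then 1 else 0)
      - (q - q⁻¹) * (if s.2 ≤ r.1 then 1 else 0) *
        ((if r.1 = s.1 then 1 else 0) - cWeight q N s.1 * cWeight q N r.1) := by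
  obtain ⟨m, n⟩ := s
  obtain ⟨i, j⟩ := r
  dsimp only at hs hr ⊢
  subst hs hr
  simp [Rm_apply, Kmat, Cmat_apply, pr_eq_iff, pr_pr, mul_comm]

lemma Rhat_mul_apply (q : ℝ) (M : Matrix (Fin N × Fin N) (Fin N × Fin N) ℝ)
    (p r : Fin N × Fin N) :
    (Rhat q N * M) p r = q ^ rhatExp p * M p.swap r
      + (q - q⁻¹) * (if p.1 < p.2 then 1 else 0) * M p r
      - (q - q⁻¹) * Cmat q N p.1 p.2 *
          ∑ m, (if m < p.2 then 1 else 0) * cWeight q N m * M (m, pr m) r := by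
  have hK : ∑ s : Fin N × Fin N, (if s.1 < p.2 then 1 else 0) * Kmat q N p s * M s r
      = Cmat q N p.1 p.2 * ∑ m, (if m < p.2 then 1 else 0) * cWeight q N m * M (m, pr m) r := by
    rw [Finset.mul_sum, Fintype.sum_prod_type]
    refine Finset.sum_congr rfl fun m _ => ?_
    simp only [Kmat, Cmat_apply]
    split_ifs <;> simp [mul_assoc, mul_left_comm]
  have hsplit : ∀ s, Rhat q N p s * M s r = q ^ rhatExp p * (if s = p.swap then M s r else 0)
      + (q - q⁻¹) * (if s = p then (if p.1 < p.2 then 1 else 0) * M p r else 0)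
      - (q - q⁻¹) * ((if s.1 < p.2 then 1 else 0) * Kmat q N p s * M s r) := by
    intro s
    rw [Rhat_apply]
    by_cases hs : s = p
    · subst hs
      split_ifs <;> ring
    · simp only [hs, if_false]
      split_ifs <;> ring
  simp only [Matrix.mul_apply, hsplit, Finset.sum_add_distrib, Finset.sum_sub_distrib,
    ← Finset.mul_sum, Finset.sum_ite_eq', Finset.mem_univ, if_true, hK]
  ring

lemma Rhat_mul_Rm_apply_of_ne {q : ℝ} (hq : 0 < q) {p : Fin N × Fin N} (hp : p.2 ≠ pr p.1)
    (r : Fin N × Fin N) : (Rhat q N * Rm q N) p r = (1 : Matrix _ _ ℝ) p r := by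
  have hp' : p.1 ≠ pr p.2 := fun h => hp (eq_pr_comm.mp h)
  have hexp : rhatExp p = if p.1 = p.2 then 1 else 0 := by
    simp [rhatExp, hp']
  rw [Rhat_mul_apply, Cmat_eq_zero q hp, Rm_apply, Rm_apply, Kmat_eq_zero_left q hp,
    Kmat_eq_zero_left q (s := p.swap) hp', rhatExp_swap, hexp, Matrix.one_apply]
  obtain ⟨k, l⟩ := p
  dsimp only at *
  by_cases hkl : k = l
  · subst hkl
    by_cases hr : r = (k, k)
    · subst hr
      simp [hq.ne']
    · simp [hr, Ne.symm hr]
  · have hle : k ≤ l ↔ k < l := ⟨fun h => lt_of_le_of_ne h hkl, le_of_lt⟩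
    by_cases hr : r = (k, l)
    · subst hr
      simp [hkl, Ne.symm hkl]
      exact fun hlk hkl' => absurd hlk (not_le.mpr hkl')
    · by_cases hr' : r = (l, k)
      · subst hr'
        simp [hkl, hle]
      · simp [hkl, hr, hr', Ne.symm hr]

lemma Rhat_mul_Rm_apply_eq_zero (q : ℝ) {p r : Fin N × Fin N} (hp : p.2 = pr p.1)
    (hr : r.2 ≠ pr r.1) : (Rhat q N * Rm q N) p r = 0 := by
  have hW : ∀ m, Rm q N (m, pr m) r = 0 := fun m => Rm_apply_eq_zero q (s := (m, pr m)) rfl hr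
  rw [Rhat_mul_apply, Rm_apply_eq_zero q hp hr,
    Rm_apply_eq_zero q (s := p.swap) (eq_pr_comm.mp hp) hr]
  simp [hW]

lemma sum_cWeight_mul_Rm (q : ℝ) (l i : Fin N) :
    ∑ m, (if m < l then 1 else 0) * cWeight q N m * Rm q N (m, pr m) (i, pr i)
      = (if pr i < l then 1 else 0) * q ^ rhatExp (i, pr i) * cWeight q N (pr i)
        - (q - q⁻¹) * (if pr i ≤ i ∧ i < l then 1 else 0) * cWeight q N i
        + (q - q⁻¹) * cWeight q N i * ∑ m ∈ Finset.Ico (pr i) l, cWeight q N m ^ 2 := by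
  have hsummand : ∀ m, (if m < l then 1 else 0) * cWeight q N m * Rm q N (m, pr m) (i, pr i)
      = (if m = pr i then (if pr i < l then 1 else 0) * q ^ rhatExp (i, pr i) * cWeight q N (pr i)
          else 0)
        - (q - q⁻¹) * (if m = i then (if pr i ≤ i ∧ i < l then 1 else 0) * cWeight q N i else 0)
        + (q - q⁻¹) * cWeight q N i *
            (if m ∈ Finset.Ico (pr i) l then cWeight q N m ^ 2 else 0) := by
    intro m
    rw [Rm_apply_of_eq_pr q rfl rfl]
    simp only [Finset.mem_Ico, eq_pr_comm (i := i), pr_le_comm (i := m), eq_comm (a := i)]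
    by_cases h₁ : m = pr i
    · subst h₁
      rw [pr_pr, rhatExp_pr]
      by_cases hmid : pr i = i
      · rw [hmid]
        by_cases hl : i < l
        · simp [hl]
          ring
        · simp [hl]
      · by_cases hl : pr i < l
        · simp [hl, hmid]
          ring
        · simp [hl, hmid]
    by_cases h₂ : m = i
    · subst h₂
      by_cases hm : m < l ∧ pr m ≤ m
      · simp [hm.1, hm.2, h₁]
        ring
      · simp only [not_and_or] at hm
        rcases hm with hm | hm <;> simp [hm, h₁]
    by_cases hm : m < l ∧ pr i ≤ m
    · simp [hm.1, hm.2, h₁, h₂]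
      ring
    · simp only [not_and_or] at hm
      rcases hm with hm | hm <;> simp [hm, h₁, h₂]
  simp only [hsummand, Finset.sum_add_distrib, Finset.sum_sub_distrib, ← Finset.mul_sum,
    Finset.sum_ite_eq', Finset.mem_univ, if_true, Finset.sum_ite_mem, Finset.univ_inter]
  ring

lemma Rhat_mul_Rm_apply_of_eq_pr {q : ℝ} (hq : 0 < q) (k i : Fin N) :
    (Rhat q N * Rm q N) (k, pr k) (i, pr i) = if k = i then 1 else 0 := by
  have hx := cWeight_mul_cWeight_pr hq k
  have hy := cWeight_mul_cWeight_pr hq i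
  rw [Rhat_mul_apply, sum_cWeight_mul_Rm]
  dsimp only [Prod.swap]
  rw [Rm_apply_of_eq_pr q (pr_pr k).symm rfl, Rm_apply_of_eq_pr q rfl rfl, Cmat_apply, if_pos rfl,
    rhatExp_pr]
  dsimp only
  rcases lt_trichotomy k i with hki | rfl | hik
  · have htele := sub_inv_mul_sum_Ico_cWeight_sq hq (pr_le_pr.mpr hki.le)
    rw [weightPrimitive_eq hq, weightPrimitive_eq hq] at htele
    simp only [pr_pr, rhatExp_pr] at htele
    simp only [Fin.lt_def, Fin.le_def, Fin.ext_iff, val_pr] at htele hki ⊢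
    -- in every consistent branch the indicators cancel, leaving `c_k c_{k'} = 1 = c_i c_{i'}`
    split_ifs at htele ⊢ <;> first | (exfalso; omega) | skip
    all_goals linear_combination (-(q - q⁻¹) * cWeight q N k * cWeight q N i) * htele
      - (q - q⁻¹) * q ^ rhatExp (k, pr k) * cWeight q N (pr k) * cWeight q N i * hx
      + (q - q⁻¹) * q ^ rhatExp (i, pr i) * cWeight q N k * cWeight q N (pr i) * hy
  · have hexp : rhatExp (k, pr k) = if k = pr k then 0 else -1 := by
      simp only [rhatExp, pr_pr, if_true]
      split_ifs <;> norm_num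
    rw [hexp, Finset.Ico_self, Finset.sum_empty]
    simp only [Fin.lt_def, Fin.le_def, Fin.ext_iff, val_pr] at hx ⊢
    have hq' : q * q⁻¹ = 1 := mul_inv_cancel₀ hq.ne'
    split_ifs <;> simp only [zpow_zero, _root_.zpow_neg_one] <;> first
      | (exfalso; omega)
      | linear_combination (q - q⁻¹) * hx
      | linear_combination (q * q⁻¹ - q⁻¹ * q⁻¹) * hx + hq'
  · rw [Finset.Ico_eq_empty_of_le (pr_le_pr.mpr hik.le), Finset.sum_empty]
    simp only [Fin.lt_def, Fin.le_def, Fin.ext_iff, val_pr] at hik ⊢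
    split_ifs <;> first | (exfalso; omega) | ring

lemma Rhat_mul_Rm {q : ℝ} (hq : 0 < q) : Rhat q N * Rm q N = 1 := by
  ext p r
  by_cases hp : p.2 = pr p.1
  · by_cases hr : r.2 = pr r.1
    · obtain ⟨k, l⟩ := p
      obtain ⟨i, j⟩ := r
      dsimp only at hp hr
      subst hp hr
      simp [Rhat_mul_Rm_apply_of_eq_pr hq, Matrix.one_apply, pr_inj]
    · have hpr : p ≠ r := by rintro rfl; exact hr hp
      rw [Rhat_mul_Rm_apply_eq_zero q hp hr, Matrix.one_apply_ne hpr]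
  · exact Rhat_mul_Rm_apply_of_ne hq hp r

end

theorem Rm_inverse_general (q : ℝ) (hq : 0 < q) (N : ℕ) :
    Rhat q N * Rm q N = 1 ∧ Rm q N * Rhat q N = 1 :=
  ⟨Rhat_mul_Rm hq, mul_eq_one_comm.mp (Rhat_mul_Rm hq)⟩

theorem Rm_inverse (q : ℝ) (hq : 0 < q) (hq1 : q ≠ 1) (N : ℕ) (hN : 3 ≤ N) :
    Rhat q N * Rm q N = 1 ∧ Rm q N * Rhat q N = 1 :=
  Rm_inverse_general q hq N
end
end

section
/- Let A be an associative algebra over ℝ containing elements γ₁,…,γ_N satisfying the relations Σ_{k,l} R̂⁻{}^{kl}_{ij} γ_k γ_l + q·γ_i γ_j = 0 for all i,j, where R̂⁻ is the inverse O_q(N) R-matrix. Then for every index i with 2i ≠ N+1 one has γ_i² = 0. -/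
open Matrix BigOperators

noncomputable section

theorem gamma_sq_zero (q : ℝ) (hq : 0 < q) (hq1 : q ≠ 1) (N : ℕ) (hN : 3 ≤ N)
    (A : Type*) [Ring A] [Algebra ℝ A] (γ : Fin N → A)
    (hrel : ∀ i j : Fin N,
      (∑ k : Fin N, ∑ l : Fin N, Rm q N (k, l) (i, j) • (γ k * γ l)) +
        q • (γ i * γ j) = 0)
    (i : Fin N) (hi : 2 * ((i : ℕ) + 1) ≠ N + 1) :
    γ i * γ i = 0 := by
  have hii : i ≠ pr i := by
    intro h
    have hv : ((pr i : Fin N) : ℕ) = N - ((i : ℕ) + 1) := Fin.val_rev i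
    have h2 := congrArg Fin.val h
    rw [hv] at h2
    have := i.isLt
    omega
  have key : ∀ k l : Fin N, Rm q N (k, l) (i, i)
      = if k = i ∧ l = i then q⁻¹ else 0 := by
    intro k l
    have hCii : Cmat q N i i = 0 := by simp [Cmat, hii]
    by_cases hk : k = i <;> by_cases hl : l = i
    · subst hk; subst hl
      simp [Rm, Rhat, Kmat, hCii, Matrix.sub_apply, Matrix.add_apply,
        Matrix.smul_apply, Matrix.one_apply, Prod.ext_iff, hii, lt_irrefl]
    · subst hk
      simp [Rm, Rhat, Kmat, hCii, Matrix.sub_apply, Matrix.add_apply,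
        Matrix.smul_apply, Matrix.one_apply, Prod.ext_iff, hii, lt_irrefl, hl,
        Ne.symm hl]
    · subst hl
      simp [Rm, Rhat, Kmat, hCii, Matrix.sub_apply, Matrix.add_apply,
        Matrix.smul_apply, Matrix.one_apply, Prod.ext_iff, hii, lt_irrefl, hk,
        Ne.symm hk]
    · simp [Rm, Rhat, Kmat, hCii, Matrix.sub_apply, Matrix.add_apply,
        Matrix.smul_apply, Matrix.one_apply, Prod.ext_iff, hii, lt_irrefl, hk, hl,
        Ne.symm hk, Ne.symm hl]
  have h := hrel i i
  have hsum : (∑ k : Fin N, ∑ l : Fin N, Rm q N (k, l) (i, i) • (γ k * γ l))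
      = q⁻¹ • (γ i * γ i) := by
    simp only [key]
    rw [Finset.sum_eq_single i]
    · rw [Finset.sum_eq_single i]
      · simp
      · intro b _ hb; simp [hb]
      · simp
    · intro b _ hb
      apply Finset.sum_eq_zero
      intro l _
      simp [hb]
    · simp
  rw [hsum] at h
  have h2 : (q⁻¹ + q) • (γ i * γ i) = 0 := by
    rw [add_smul]; exact h
  have hne : q⁻¹ + q ≠ 0 := by positivity
  rcases smul_eq_zero.mp h2 with h3 | h3
  · exact absurd h3 hne
  · exact h3
end
end
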